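/- arXiv:math/0212247 — 12 statements merged into one kernel-verified Lean document; each statement's English description precedes it below -/
import Mathlib

section
/- For any permutation π of {1,...,n}, the number of inversions of π equals the excedance difference of π plus the number of inversions of the subword of excedance letters plus the number of inversions of the subword of non-excedance letters. -/
open Finset

def exc {n : ℕ} (π : Equiv.Perm (Fin n)) : ℕ :=
  (univ.filter (fun i => i < π i)).card

def dexc {n : ℕ} (π : Equiv.Perm (Fin n)) : ℕ :=
  ∑ i ∈ univ.filter (fun i => i < π i), ((π i : ℕ) - (i : ℕ))

def inv {n : ℕ} (π : Equiv.Perm (Fin n)) : ℕ :=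
  (univ.filter (fun p : Fin n × Fin n => p.1 < p.2 ∧ π p.2 < π p.1)).card

/-- Inversions among the excedance letters (positions both excedances). -/
def invE {n : ℕ} (π : Equiv.Perm (Fin n)) : ℕ :=
  (univ.filter (fun p : Fin n × Fin n =>
    p.1 < p.2 ∧ p.1 < π p.1 ∧ p.2 < π p.2 ∧ π p.2 < π p.1)).card

/-- Inversions among the non-excedance letters. -/
def invNE {n : ℕ} (π : Equiv.Perm (Fin n)) : ℕ :=
  (univ.filter (fun p : Fin n × Fin n =>
    p.1 < p.2 ∧ π p.1 ≤ p.1 ∧ π p.2 ≤ p.2 ∧ π p.2 < π p.1)).card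

/-!
Write `R i` (`invsAfter`) for the number of inversions `(i, j)` and `L i` (`invsBefore`) for the
number of inversions `(j, i)`. Counting the letters below `π i` in two ways gives
`π i + L i = i + R i`. An inversion `(j, i)` whose right end is an excedance has an excedance as
its left end (`j < i < π i < π j`), and an inversion `(i, j)` whose left end is a non-excedance has
a non-excedance as its right end (`π j < π i ≤ i < j`). Hence `invE = ∑_{exc} L` and
`invNE = ∑_{non-exc} R`, while `inv = ∑ R = ∑_{exc} (π i - i + L i) + ∑_{non-exc} R`.
-/

section

variable {n : ℕ} (π : Equiv.Perm (Fin n))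

def invsAfter (i : Fin n) : ℕ := #{j | i < j ∧ π j < π i}

def invsBefore (i : Fin n) : ℕ := #{j | j < i ∧ π i < π j}

lemma card_filter_apply_lt_apply (i : Fin n) : #{j | π j < π i} = π i := by
  rw [← Fin.card_Iio (π i)]
  exact card_equiv π fun j => by simp

lemma card_filter_lt_apply_add_invsAfter (i : Fin n) :
    #{j | j < i ∧ π j < π i} + invsAfter π i = π i := by
  rw [invsAfter, ← card_filter_apply_lt_apply π i,
    ← card_filter_add_card_filter_not (s := {j | π j < π i}) (fun j => j < i)]
  simp only [filter_filter]
  congr 2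
  · ext j; simp [and_comm]
  · ext j
    simp only [mem_filter, mem_univ, true_and, not_lt]
    grind

lemma card_filter_lt_apply_add_invsBefore (i : Fin n) :
    #{j | j < i ∧ π j < π i} + invsBefore π i = i := by
  rw [invsBefore, ← Fin.card_Iio i,
    ← card_filter_add_card_filter_not (s := Iio i) (fun j => π j < π i)]
  congr 2
  · ext j; simp
  · ext j
    simp only [mem_filter, mem_univ, true_and, mem_Iio, not_lt]
    grind [π.injective.eq_iff]

lemma val_apply_add_invsBefore (i : Fin n) :
    (π i : ℕ) + invsBefore π i = i + invsAfter π i := by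
  have := card_filter_lt_apply_add_invsAfter π i
  have := card_filter_lt_apply_add_invsBefore π i
  omega

lemma inv_eq_sum_invsAfter : inv π = ∑ i, invsAfter π i := by
  simp only [inv, invsAfter, card_filter, Fintype.sum_prod_type]

lemma invE_eq_sum_invsBefore : invE π = ∑ i with i < π i, invsBefore π i := by
  simp only [invE, invsBefore, card_filter, Fintype.sum_prod_type, sum_filter]
  rw [sum_comm]
  refine sum_congr rfl fun i _ => ?_
  split_ifs with hi
  · refine sum_congr rfl fun j _ => if_congr ?_ rfl rfl
    exact ⟨fun h => ⟨h.1, h.2.2.2⟩,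
      fun ⟨hji, hij⟩ => ⟨hji, hji.trans (hi.trans hij), hi, hij⟩⟩
  · exact sum_eq_zero fun j _ => if_neg fun h => hi h.2.2.1

lemma invNE_eq_sum_invsAfter : invNE π = ∑ i with π i ≤ i, invsAfter π i := by
  simp only [invNE, invsAfter, card_filter, Fintype.sum_prod_type, sum_filter]
  refine sum_congr rfl fun i _ => ?_
  split_ifs with hi
  · refine sum_congr rfl fun j _ => if_congr ?_ rfl rfl
    exact ⟨fun h => ⟨h.1, h.2.2.2⟩,
      fun ⟨hij, hji⟩ => ⟨hij, hi, (hji.trans_le (hi.trans hij.le)).le, hji⟩⟩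
  · exact sum_eq_zero fun j _ => if_neg fun h => hi h.2.1

lemma sum_invsAfter_excedances :
    ∑ i with i < π i, invsAfter π i = dexc π + ∑ i with i < π i, invsBefore π i := by
  rw [dexc, ← sum_add_distrib]
  refine sum_congr rfl fun i hi => ?_
  have hi : (i : ℕ) < π i := (mem_filter.1 hi).2
  have := val_apply_add_invsBefore π i
  omega

end

theorem inv_eq_dexc_add_invE_add_invNE {n : ℕ} (π : Equiv.Perm (Fin n)) :
    inv π = dexc π + invE π + invNE π := by
  rw [inv_eq_sum_invsAfter, ← sum_filter_add_sum_filter_not _ (fun i => i < π i),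
    sum_invsAfter_excedances, invE_eq_sum_invsBefore, invNE_eq_sum_invsAfter]
  simp only [not_lt]
end

section
/- For any permutation π of {1,...,n}, the excedance difference dexc(π) is at most the inversion number inv(π), and inv(π) is at most 2·dexc(π) − exc(π), where exc(π) is the number of excedances. -/
/-!
Let `L i = #{j > i | π j < π i}` be the Lehmer code, so that `inv π = ∑ L i`. Each of the
`π i` values below `π i` sits either at one of the `i` positions left of `i` or at one of the
`L i` positions counted by `L i`, hence `π i - i ≤ L i`; summing over the excedances gives
`dexc π ≤ inv π`.

For the second bound induct on `inv π`. If `k` is the last excedance of `π ≠ 1`, then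
`π (k + 1) ≤ k + 1 ≤ π k`, so swapping the adjacent positions `k, k + 1` removes exactly one
inversion, and a case check on the two moved values shows that `2 dexc - exc` drops by at least one.
-/

open Finset

namespace Equiv.Perm

variable {n : ℕ} (π : Perm (Fin n))

def lehmer (i : Fin n) : ℕ := #{j | i < j ∧ π j < π i}

theorem inv_eq_sum_lehmer : inv π = ∑ i, π.lehmer i := by
  simp only [inv, lehmer, card_filter, Fintype.sum_prod_type]

theorem val_apply_le_add_lehmer (i : Fin n) : (π i : ℕ) ≤ i + π.lehmer i := by
  have hsub :
      ∀ v ∈ Iio (π i), π.symm v ∈ Iio i ∪ ({j | i < j ∧ π j < π i} : Finset (Fin n)) := by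
    intro v hv
    simp only [mem_Iio, mem_union, mem_filter, mem_univ, true_and] at hv ⊢
    rcases lt_trichotomy (π.symm v) i with h | h | h
    · exact .inl h
    · simp [← h] at hv
    · exact .inr ⟨h, by simpa using hv⟩
  calc (π i : ℕ) = #(Iio (π i)) := (Fin.card_Iio _).symm
    _ ≤ #(Iio i ∪ ({j | i < j ∧ π j < π i} : Finset (Fin n))) :=
      card_le_card_of_injOn _ hsub π.symm.injective.injOn
    _ ≤ #(Iio i) + π.lehmer i := card_union_le _ _
    _ = i + π.lehmer i := by rw [Fin.card_Iio]

theorem dexc_eq_sum_tsub : dexc π = ∑ i, ((π i : ℕ) - i) :=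
  sum_filter_of_ne fun i _ h => by rw [Fin.lt_def]; omega

theorem dexc_le_inv : dexc π ≤ inv π := by
  rw [dexc_eq_sum_tsub, inv_eq_sum_lehmer]
  exact sum_le_sum fun i _ => Nat.sub_le_iff_le_add'.mpr (π.val_apply_le_add_lehmer i)

theorem inv_mul_eq_card (τ : Perm (Fin n)) :
    inv (π * τ) = #{p : Fin n × Fin n | τ.symm p.1 < τ.symm p.2 ∧ π p.2 < π p.1} :=
  card_equiv (τ.prodCongr τ) fun p => by rw [mem_filter, mem_filter]; simp

theorem swap_lt_swap_iff_of_adjacent {k k' i j : Fin n} (hk : (k' : ℕ) = k + 1)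
    (h : ¬(i = k ∧ j = k')) (h' : ¬(i = k' ∧ j = k)) :
    swap k k' i < swap k k' j ↔ i < j := by
  simp only [swap_apply_def, Fin.ext_iff, Fin.lt_def] at *
  split_ifs <;> omega

theorem inv_mul_swap_add_one {k k' : Fin n} (hk : (k' : ℕ) = k + 1) (hπ : π k' < π k) :
    inv (π * swap k k') + 1 = inv π := by
  have hkk' : k < k' := by rw [Fin.lt_def]; omega
  have hpair : (k, k') ∉ ({p | swap k k' p.1 < swap k k' p.2 ∧ π p.2 < π p.1} : Finset _) := by
    simp [hkk'.not_gt]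
  rw [inv_mul_eq_card, symm_swap, ← card_insert_of_notMem hpair, inv]
  congr 1
  ext ⟨i, j⟩
  by_cases h : i = k ∧ j = k'
  · obtain ⟨rfl, rfl⟩ := h
    simp [hkk', hπ]
  by_cases h' : i = k' ∧ j = k
  · obtain ⟨rfl, rfl⟩ := h'
    simp [hkk'.not_gt, hπ.not_gt, hkk'.ne]
  simp [swap_lt_swap_iff_of_adjacent hk h h', Prod.ext_iff, h]

/-- `2 * dexc π - exc π`: the summand `(v - i) + (v - (i + 1))` is `2 (v - i) - 1` when `i < v`
and `0` otherwise. -/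
def twoDexcSubExc : ℕ := ∑ i, ((π i : ℕ) - i + ((π i : ℕ) - (i + 1)))

theorem exc_add_twoDexcSubExc : exc π + π.twoDexcSubExc = 2 * dexc π := by
  rw [exc, card_filter, twoDexcSubExc, dexc_eq_sum_tsub, mul_sum, ← sum_add_distrib]
  refine sum_congr rfl fun i _ => ?_
  split_ifs with h <;> rw [Fin.lt_def] at h <;> omega

theorem twoDexcSubExc_mul_swap_add_one_le {k k' : Fin n} (hk : (k' : ℕ) = k + 1)
    (hdesc : π k' < π k) (hexc : k < π k) (hk' : π k' ≤ k') :
    (π * swap k k').twoDexcSubExc + 1 ≤ π.twoDexcSubExc := by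
  have hkk' : k ≠ k' := by rw [ne_eq, Fin.ext_iff]; omega
  -- after reindexing by the swap, the two sums differ only at positions `k` and `k'`
  have split (f : Fin n → ℕ) : ∑ i, f i = f k + f k' + ∑ i ∈ {k, k'}ᶜ, f i := by
    rw [← sum_add_sum_compl {k, k'}, sum_pair hkk']
  rw [twoDexcSubExc, twoDexcSubExc, ← Equiv.sum_comp (swap k k'), split, split]
  simp only [mul_apply, swap_apply_self, swap_apply_left, swap_apply_right]
  have hfix : ∀ i ∈ ({k, k'} : Finset (Fin n))ᶜ, swap k k' i = i := by
    intro i hi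
    simp only [mem_compl, mem_insert, mem_singleton, not_or] at hi
    exact swap_apply_of_ne_of_ne hi.1 hi.2
  rw [sum_congr rfl fun i hi => by rw [hfix i hi]]
  rw [Fin.lt_def] at hdesc hexc
  rw [Fin.le_def] at hk'
  omega

theorem exists_lt_apply_of_ne_one (hπ : π ≠ 1) : ∃ i, i < π i := by
  by_contra! h
  have hsum : ∑ i, (π i : ℕ) = ∑ i : Fin n, (i : ℕ) := Equiv.sum_comp π (fun i => (i : ℕ))
  refine hπ (Equiv.ext fun i => Fin.ext ?_)
  exact (sum_eq_sum_iff_of_le fun i _ => Fin.le_def.mp (h i)).mp hsum i (mem_univ i)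

theorem exists_adjacent_descent_at_last_excedance (hπ : π ≠ 1) :
    ∃ k k' : Fin n, (k' : ℕ) = k + 1 ∧ π k' < π k ∧ k < π k ∧ π k' ≤ k' := by
  obtain ⟨i, hi⟩ := π.exists_lt_apply_of_ne_one hπ
  obtain ⟨k, hk, hlast⟩ := exists_max_image ({i | i < π i} : Finset (Fin n)) id
    ⟨i, by simpa using hi⟩
  simp only [mem_filter, mem_univ, true_and, id] at hk hlast
  have hk1 : (k : ℕ) + 1 < n := by have := (π k).isLt; rw [Fin.lt_def] at hk; omega
  let k' : Fin n := ⟨k + 1, hk1⟩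
  have hk' : π k' ≤ k' := not_lt.mp fun h => by simpa [k', Fin.le_def] using hlast k' h
  have hne : π k' ≠ π k := fun h => by simpa [k', Fin.ext_iff] using π.injective h
  exact ⟨k, k', rfl, lt_of_le_of_ne (hk'.trans hk) hne, hk, hk'⟩

theorem inv_one : inv (1 : Perm (Fin n)) = 0 := by
  rw [inv, card_eq_zero, filter_eq_empty_iff]
  exact fun _ _ h => h.1.asymm h.2

theorem inv_le_twoDexcSubExc : inv π ≤ π.twoDexcSubExc := by
  induction h : inv π generalizing π with
  | zero => exact Nat.zero_le _
  | succ m ih =>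
    have hπ : π ≠ 1 := by rintro rfl; simp [inv_one] at h
    obtain ⟨k, k', hk, hdesc, hexc, hk'⟩ := π.exists_adjacent_descent_at_last_excedance hπ
    have hinv := π.inv_mul_swap_add_one hk hdesc
    have hweight := π.twoDexcSubExc_mul_swap_add_one_le hk hdesc hexc hk'
    have := ih (π * swap k k') (by omega)
    omega

end Equiv.Perm

theorem dexc_le_inv_and_inv_le {n : ℕ} (π : Equiv.Perm (Fin n)) :
    dexc π ≤ inv π ∧ inv π + exc π ≤ 2 * dexc π :=
  ⟨π.dexc_le_inv, by have := π.inv_le_twoDexcSubExc; have := π.exc_add_twoDexcSubExc; omega⟩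
end

section
/- For a permutation π of {1,...,n}, exc(π) = inv(π) if and only if exc(π) = dexc(π). -/
open Finset

/-! Counting the inversions `(i, j)` by their first entry `i` (the Lehmer code of `π`), at least
`π i - i` of them start at an excedance `i`: of the `π i` positions carrying a value below `π i`,
at most `i` lie left of `i`. Hence `exc ≤ dexc ≤ inv`, and `exc = dexc` exactly when
`π i ≤ i + 1` for every `i`. Under that condition the bound is attained at excedances, and no
inversion starts at a non-excedance `i`, because `π` then maps `{0, …, i}` onto itself. So
`inv = dexc` as well. -/

section
variable {n : ℕ} (π : Equiv.Perm (Fin n))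

def lehmer (i : Fin n) : ℕ := #{j | i < j ∧ π j < π i}

lemma inv_eq_sum_lehmer : inv π = ∑ i, lehmer π i := by
  simp only [inv, lehmer, card_filter, Fintype.sum_prod_type]

lemma dexc_eq_sum_sub : dexc π = ∑ i, ((π i : ℕ) - i) := by
  rw [dexc, sum_filter]
  refine sum_congr rfl fun i _ => ?_
  split_ifs with h
  · rfl
  · exact (Nat.sub_eq_zero_of_le (not_lt.1 h)).symm

lemma exc_le_dexc : exc π ≤ dexc π := by
  rw [exc, dexc, card_eq_sum_ones]
  refine sum_le_sum fun i hi => ?_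
  have : i < π i := (mem_filter.1 hi).2
  omega

lemma exc_eq_dexc_iff : exc π = dexc π ↔ ∀ i, (π i : ℕ) ≤ i + 1 := by
  have hle : ∀ i ∈ univ.filter (fun i => i < π i), 1 ≤ (π i : ℕ) - i := fun i hi => by
    have : i < π i := (mem_filter.1 hi).2
    omega
  rw [exc, dexc, card_eq_sum_ones, sum_eq_sum_iff_of_le hle]
  refine forall_congr' fun i => ?_
  simp only [mem_filter, mem_univ, true_and, Fin.lt_def]
  omega

lemma card_filter_apply_lt (v : Fin n) : #{j | π j < v} = v := by
  rw [← Fin.card_Iio v]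
  exact card_equiv π (by simp)

lemma sub_le_lehmer (i : Fin n) : (π i : ℕ) - i ≤ lehmer π i := by
  have hsub : ({j | π j < π i} : Finset (Fin n)) ⊆
      Iio i ∪ ({j | i < j ∧ π j < π i} : Finset (Fin n)) := by
    intro j hj
    simp only [mem_filter, mem_univ, true_and, mem_union, mem_Iio] at hj ⊢
    rcases lt_trichotomy j i with h | rfl | h
    · exact .inl h
    · exact absurd hj (lt_irrefl _)
    · exact .inr ⟨h, hj⟩
  have := (card_le_card hsub).trans (card_union_le _ _)
  rw [card_filter_apply_lt, Fin.card_Iio] at this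
  exact Nat.sub_le_iff_le_add'.2 this

lemma dexc_le_inv : dexc π ≤ inv π := by
  rw [dexc_eq_sum_sub, inv_eq_sum_lehmer]
  exact sum_le_sum fun i _ => sub_le_lehmer π i

variable {π}

lemma lehmer_eq_zero_of_forall_le_succ (hπ : ∀ k, (π k : ℕ) ≤ k + 1) {i : Fin n}
    (hi : π i ≤ i) : lehmer π i = 0 := by
  have hmaps : (Iic i).map π.toEmbedding = Iic i := by
    refine map_eq_of_subset fun v hv => ?_
    obtain ⟨k, hk, rfl⟩ := mem_map.1 hv
    rw [mem_Iic] at hk ⊢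
    rcases hk.lt_or_eq with hk | rfl
    · have := hπ k
      rw [Equiv.coe_toEmbedding, Fin.le_def]
      rw [Fin.lt_def] at hk
      omega
    · exact hi
  rw [lehmer, card_eq_zero, filter_eq_empty_iff]
  rintro j - ⟨hij, hj⟩
  have : π j ∈ (Iic i).map π.toEmbedding := by
    rw [hmaps]; exact mem_Iic.2 (hj.le.trans hi)
  obtain ⟨k, hk, hkj⟩ := mem_map.1 this
  rw [π.toEmbedding.injective hkj, mem_Iic] at hk
  exact hk.not_gt hij

lemma lehmer_le_sub_of_forall_le_succ (hπ : ∀ k, (π k : ℕ) ≤ k + 1) {i : Fin n}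
    (hi : i < π i) : lehmer π i ≤ (π i : ℕ) - i := by
  have hdisj : Disjoint (Iio i) ({j | i < j ∧ π j < π i} : Finset (Fin n)) :=
    disjoint_left.2 fun j hji hij => (mem_Iio.1 hji).not_gt (mem_filter.1 hij).2.1
  have hsub : Iio i ∪ ({j | i < j ∧ π j < π i} : Finset (Fin n)) ⊆
      ({j | π j < π i} : Finset (Fin n)) := by
    refine union_subset (fun k hk => ?_) (monotone_filter_right _ fun _ _ => And.right)
    have := hπ k
    rw [mem_Iio, Fin.lt_def] at hk
    rw [Fin.lt_def] at hi
    simp only [mem_filter, mem_univ, true_and, Fin.lt_def]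
    omega
  have := card_le_card hsub
  rw [card_union_of_disjoint hdisj, card_filter_apply_lt, Fin.card_Iio] at this
  rw [lehmer]; omega

lemma inv_le_dexc_of_forall_le_succ (hπ : ∀ k, (π k : ℕ) ≤ k + 1) : inv π ≤ dexc π := by
  rw [inv_eq_sum_lehmer, dexc_eq_sum_sub]
  refine sum_le_sum fun i _ => ?_
  rcases lt_or_ge i (π i) with hi | hi
  · exact lehmer_le_sub_of_forall_le_succ hπ hi
  · simp [lehmer_eq_zero_of_forall_le_succ hπ hi]

end

theorem exc_eq_inv_iff_exc_eq_dexc {n : ℕ} (π : Equiv.Perm (Fin n)) :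
    exc π = inv π ↔ exc π = dexc π := by
  have h₁ := exc_le_dexc π
  have h₂ := dexc_le_inv π
  refine ⟨fun h => by omega, fun h => ?_⟩
  have := inv_le_dexc_of_forall_le_succ ((exc_eq_dexc_iff π).1 h)
  omega
end

section
/- A permutation π of {1,...,n} is bi-increasing (i.e., both its excedance letter subword and non-excedance letter subword are increasing) if and only if π avoids the pattern 321, i.e., there are no indices i < j < k with π(i) > π(j) > π(k). -/
open Finset

/-- π avoids the pattern 321. -/
def Avoids321 {n : ℕ} (π : Equiv.Perm (Fin n)) : Prop :=
  ¬ ∃ i j k : Fin n, i < j ∧ j < k ∧ π k < π j ∧ π j < π i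

/-- Both the excedance letter subword and the non-excedance letter subword are increasing. -/
def BiIncreasing {n : ℕ} (π : Equiv.Perm (Fin n)) : Prop :=
  (∀ i j : Fin n, i < j → i < π i → j < π j → π i < π j) ∧
  (∀ i j : Fin n, i < j → π i ≤ i → π j ≤ j → π i < π j)

theorem biIncreasing_iff_avoids321 {n : ℕ} (π : Equiv.Perm (Fin n)) :
    BiIncreasing π ↔ Avoids321 π := by
  constructor
  · rintro ⟨hE, hN⟩ ⟨i, j, k, hij, hjk, h1, h2⟩
    by_cases hi : i < π i
    · by_cases hj : j < π j
      · exact absurd (hE i j hij hi hj) (asymm h2)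
      · have hjn : π j ≤ j := not_lt.mp hj
        have hk : π k ≤ k := le_of_lt (lt_of_lt_of_le h1 hjn |>.trans hjk)
        exact absurd (hN j k hjk hjn hk) (asymm h1)
    · have hin : π i ≤ i := not_lt.mp hi
      have hjn : π j ≤ j := le_of_lt (lt_of_lt_of_le h2 (hin.trans hij.le))
      have hk : π k ≤ k := le_of_lt (lt_of_lt_of_le h1 hjn |>.trans hjk)
      exact absurd (hN j k hjk hjn hk) (asymm h1)
  · intro hA
    constructor
    · intro i j hij hi hj
      by_contra hle
      have hne : π i ≠ π j := fun h => absurd (π.injective h) (ne_of_lt hij)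
      have hgt : π j < π i := lt_of_le_of_ne (not_lt.mp hle) (Ne.symm hne)
      have hex : ∃ k, j < k ∧ π k ≤ j := by
        by_contra hno
        push_neg at hno
        have hmap : ∀ x ∈ insert i (Finset.Ioi j), π x ∈ Finset.Ioi j := by
          intro x hx
          rcases Finset.mem_insert.mp hx with rfl | hx
          · exact Finset.mem_Ioi.mpr (hgt.trans' hj)
          · exact Finset.mem_Ioi.mpr (hno x (Finset.mem_Ioi.mp hx))
        have hinj : Set.InjOn π ↑(insert i (Finset.Ioi j)) :=
          fun a _ b _ h => π.injective h
        have hcard := Finset.card_le_card_of_injOn π hmap hinj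
        rw [Finset.card_insert_of_notMem (by simp [Finset.mem_Ioi, not_lt, hij.le])] at hcard
        omega
      obtain ⟨k, hjk, hk⟩ := hex
      exact hA ⟨i, j, k, hij, hjk, lt_of_le_of_lt hk hj, hgt⟩
    · intro i j hij hi hj
      by_contra hle
      have hne : π i ≠ π j := fun h => absurd (π.injective h) (ne_of_lt hij)
      have hgt : π j < π i := lt_of_le_of_ne (not_lt.mp hle) (Ne.symm hne)
      have hex : ∃ h, h < i ∧ i < π h := by
        by_contra hno
        push_neg at hno
        have hmap : ∀ x ∈ insert j (Finset.Iic i), π x ∈ Finset.Iic i := by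
          intro x hx
          rcases Finset.mem_insert.mp hx with rfl | hx
          · exact Finset.mem_Iic.mpr ((hgt.trans_le hi).le)
          · rcases lt_or_eq_of_le (Finset.mem_Iic.mp hx) with h | h
            · exact Finset.mem_Iic.mpr (hno x h)
            · subst h; exact Finset.mem_Iic.mpr hi
        have hinj : Set.InjOn π ↑(insert j (Finset.Iic i)) :=
          fun a _ b _ h => π.injective h
        have hcard := Finset.card_le_card_of_injOn π hmap hinj
        rw [Finset.card_insert_of_notMem (by simp [Finset.mem_Iic, not_le, hij])] at hcard
        omega
      obtain ⟨h, hhi, hh⟩ := hex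
      exact hA ⟨h, i, j, hhi, hij, hgt, lt_of_le_of_lt hi hh⟩
end

section
/- A permutation π of {1,...,n} is bi-increasing if and only if for every excedance k one has π(k) − k = |{i > k : π(i) < π(k)}|, and for every non-excedance k one has k − π(k) = |{i < k : π(i) > π(k)}|. -/
open Finset

lemma key_count {n : ℕ} (π : Equiv.Perm (Fin n)) (k : Fin n) :
    (univ.filter (fun i => k < i ∧ π i < π k)).card + (k : ℕ) =
    (π k : ℕ) + (univ.filter (fun i => i < k ∧ π k < π i)).card := by
  have h1 : (univ.filter (fun i => k < i ∧ π i < π k)) ∪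
      (univ.filter (fun i => i < k ∧ π i < π k)) =
      univ.filter (fun i : Fin n => π i < π k) := by
    rw [← Finset.filter_or]
    apply Finset.filter_congr
    intro i _
    constructor
    · rintro (⟨_, h⟩ | ⟨_, h⟩) <;> exact h
    · intro h
      rcases lt_or_gt_of_ne (fun hik : i = k => absurd h (by simp [hik])) with hlt | hgt
      · exact Or.inr ⟨hlt, h⟩
      · exact Or.inl ⟨hgt, h⟩
  have h2 : (univ.filter (fun i => i < k ∧ π i < π k)) ∪
      (univ.filter (fun i => i < k ∧ π k < π i)) =
      univ.filter (fun i : Fin n => i < k) := by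
    rw [← Finset.filter_or]
    apply Finset.filter_congr
    intro i _
    constructor
    · rintro (⟨h, _⟩ | ⟨h, _⟩) <;> exact h
    · intro h
      rcases lt_or_gt_of_ne (fun hv : π i = π k => absurd (π.injective hv) h.ne) with hlt | hgt
      · exact Or.inl ⟨h, hlt⟩
      · exact Or.inr ⟨h, hgt⟩
  have d1 : Disjoint (univ.filter (fun i => k < i ∧ π i < π k))
      (univ.filter (fun i => i < k ∧ π i < π k)) := by
    rw [Finset.disjoint_filter]
    rintro i _ ⟨h, _⟩ ⟨h', _⟩
    exact absurd (h.trans h') (lt_irrefl _)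
  have d2 : Disjoint (univ.filter (fun i => i < k ∧ π i < π k))
      (univ.filter (fun i => i < k ∧ π k < π i)) := by
    rw [Finset.disjoint_filter]
    rintro i _ ⟨_, h⟩ ⟨_, h'⟩
    exact absurd (h.trans h') (lt_irrefl _)
  have c1 : (univ.filter (fun i : Fin n => π i < π k)).card = (π k : ℕ) := by
    have : univ.filter (fun i : Fin n => π i < π k) =
        (univ.filter (fun v : Fin n => v < π k)).image π.symm := by
      ext i
      simp only [Finset.mem_filter, Finset.mem_image, Finset.mem_univ, true_and]
      constructor
      · intro h; exact ⟨π i, h, π.symm_apply_apply i⟩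
      · rintro ⟨v, hv, rfl⟩; simpa using hv
    rw [this, Finset.card_image_of_injective _ π.symm.injective]
    have : univ.filter (fun v : Fin n => v < π k) = Finset.Iio (π k) := by
      ext v; simp
    rw [this, Fin.card_Iio]
  have c2 : (univ.filter (fun i : Fin n => i < k)).card = (k : ℕ) := by
    have : univ.filter (fun i : Fin n => i < k) = Finset.Iio k := by
      ext v; simp
    rw [this, Fin.card_Iio]
  have e1 := Finset.card_union_of_disjoint d1
  have e2 := Finset.card_union_of_disjoint d2
  rw [h1, c1] at e1
  rw [h2, c2] at e2
  omega

theorem avoids321_iff_letter_counts {n : ℕ} (π : Equiv.Perm (Fin n)) :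
    Avoids321 π ↔
      ((∀ k : Fin n, k < π k →
          (π k : ℕ) - (k : ℕ) = (univ.filter (fun i => k < i ∧ π i < π k)).card) ∧
       (∀ k : Fin n, π k ≤ k →
          (k : ℕ) - (π k : ℕ) = (univ.filter (fun i => i < k ∧ π k < π i)).card)) := by
  constructor
  · intro h
    constructor
    · intro k hk
      have hkey := key_count π k
      have hS3 : (univ.filter (fun i => i < k ∧ π k < π i)).card = 0 := by
        by_contra hne
        obtain ⟨i, hi⟩ := Finset.card_pos.mp (Nat.pos_of_ne_zero hne)
        simp only [Finset.mem_filter, Finset.mem_univ, true_and] at hi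
        have hk' : (k : ℕ) < (π k : ℕ) := hk
        have hS1 : 0 < (univ.filter (fun i => k < i ∧ π i < π k)).card := by omega
        obtain ⟨j, hj⟩ := Finset.card_pos.mp hS1
        simp only [Finset.mem_filter, Finset.mem_univ, true_and] at hj
        exact h ⟨i, k, j, hi.1, hj.1, hj.2, hi.2⟩
      have hk' : (k : ℕ) < (π k : ℕ) := hk
      omega
    · intro k hk
      have hkey := key_count π k
      have hS1 : (univ.filter (fun i => k < i ∧ π i < π k)).card = 0 := by
        by_contra hne
        obtain ⟨j, hj⟩ := Finset.card_pos.mp (Nat.pos_of_ne_zero hne)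
        simp only [Finset.mem_filter, Finset.mem_univ, true_and] at hj
        have hk' : (π k : ℕ) ≤ (k : ℕ) := hk
        have hS3 : 0 < (univ.filter (fun i => i < k ∧ π k < π i)).card := by omega
        obtain ⟨i, hi⟩ := Finset.card_pos.mp hS3
        simp only [Finset.mem_filter, Finset.mem_univ, true_and] at hi
        exact h ⟨i, k, j, hi.1, hj.1, hj.2, hi.2⟩
      have hk' : (π k : ℕ) ≤ (k : ℕ) := hk
      omega
  · rintro ⟨h1, h2⟩ ⟨i, j, k, hij, hjk, hkj, hji⟩
    have hkey := key_count π j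
    rcases lt_or_ge j (π j) with hex | hnex
    · have := h1 j hex
      have hj' : (j : ℕ) < (π j : ℕ) := hex
      have hS3 : (univ.filter (fun i => i < j ∧ π j < π i)).card = 0 := by omega
      have : i ∈ univ.filter (fun i => i < j ∧ π j < π i) := by
        simp only [Finset.mem_filter, Finset.mem_univ, true_and]
        exact ⟨hij, hji⟩
      rw [Finset.card_eq_zero.mp hS3] at this
      exact absurd this (Finset.notMem_empty i)
    · have := h2 j hnex
      have hj' : (π j : ℕ) ≤ (j : ℕ) := hnex
      have hS1 : (univ.filter (fun i => j < i ∧ π i < π j)).card = 0 := by omega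
      have : k ∈ univ.filter (fun i => j < i ∧ π i < π j) := by
        simp only [Finset.mem_filter, Finset.mem_univ, true_and]
        exact ⟨hjk, hkj⟩
      rw [Finset.card_eq_zero.mp hS1] at this
      exact absurd this (Finset.notMem_empty k)
end

section
/- Let π be a 321-avoiding permutation of {1,...,n}. Then i is a fixed point of π if and only if π(j) < π(i) for all j < i and π(j) > π(i) for all j > i. -/
open Finset

private lemma card_filter_apply_lt_s6 {n : ℕ} (π : Equiv.Perm (Fin n)) (i : Fin n) :
    (univ.filter fun k => π k < i).card = i.val := by
  have : (univ.filter fun k => π k < i) = (Iio i).image π.symm := by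
    ext k
    simp only [Finset.mem_filter, Finset.mem_univ, true_and, Finset.mem_image,
      Finset.mem_Iio]
    constructor
    · exact fun hk => ⟨π k, hk, π.symm_apply_apply k⟩
    · rintro ⟨a, ha, rfl⟩; simpa using ha
  rw [this, Finset.card_image_of_injective _ π.symm.injective, Fin.card_Iio]

private lemma card_filter_lt_apply {n : ℕ} (π : Equiv.Perm (Fin n)) (i : Fin n) :
    (univ.filter fun k => i < π k).card = n - 1 - i.val := by
  have : (univ.filter fun k => i < π k) = (Ioi i).image π.symm := by
    ext k
    simp only [Finset.mem_filter, Finset.mem_univ, true_and, Finset.mem_image,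
      Finset.mem_Ioi]
    constructor
    · exact fun hk => ⟨π k, hk, π.symm_apply_apply k⟩
    · rintro ⟨a, ha, rfl⟩; simpa using ha
  rw [this, Finset.card_image_of_injective _ π.symm.injective, Fin.card_Ioi]

theorem fixed_point_iff {n : ℕ} (π : Equiv.Perm (Fin n)) (h : Avoids321 π)
    (i : Fin n) :
    π i = i ↔ (∀ j : Fin n, j < i → π j < π i) ∧ (∀ j : Fin n, i < j → π i < π j) := by
  constructor
  · intro hfix
    constructor
    · intro j hj
      by_contra hge
      push_neg at hge
      have hne : π j ≠ π i := fun e => absurd (π.injective e) (ne_of_lt hj)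
      have hgt : π i < π j := lt_of_le_of_ne hge (Ne.symm hne)
      -- find k > i with π k < i
      have hcard : (univ.filter fun k => π k < i).card = i.val := card_filter_apply_lt_s6 π i
      have hnot : ¬ (univ.filter fun k => π k < i) ⊆ Iio i := by
        intro hsub
        have heq : (univ.filter fun k => π k < i) = Iio i :=
          Finset.eq_of_subset_of_card_le hsub (by rw [hcard, Fin.card_Iio])
        have : j ∈ (univ.filter fun k => π k < i) := heq ▸ Finset.mem_Iio.2 hj
        simp at this
        rw [hfix] at hgt
        exact absurd this (not_lt.2 (le_of_lt hgt))
      obtain ⟨k, hk, hki⟩ := Finset.not_subset.1 hnot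
      simp at hk
      simp at hki
      have hik : i < k := lt_of_le_of_ne hki (by
        rintro rfl
        rw [hfix] at hk
        exact lt_irrefl _ hk)
      exact h ⟨j, i, k, hj, hik, by rw [hfix]; exact hk, hgt⟩
    · intro j hj
      by_contra hge
      push_neg at hge
      have hne : π j ≠ π i := fun e => absurd (π.injective e) (ne_of_gt hj)
      have hgt : π j < π i := lt_of_le_of_ne hge hne
      -- find k < i with i < π k
      have hcard : (univ.filter fun k => i < π k).card = n - 1 - i.val := card_filter_lt_apply π i
      have hnot : ¬ (univ.filter fun k => i < π k) ⊆ Ioi i := by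
        intro hsub
        have heq : (univ.filter fun k => i < π k) = Ioi i :=
          Finset.eq_of_subset_of_card_le hsub (by rw [hcard, Fin.card_Ioi])
        have : j ∈ (univ.filter fun k => i < π k) := heq ▸ Finset.mem_Ioi.2 hj
        simp at this
        rw [hfix] at hgt
        exact absurd this (not_lt.2 (le_of_lt hgt))
      obtain ⟨k, hk, hki⟩ := Finset.not_subset.1 hnot
      simp at hk
      simp at hki
      have hik : k < i := lt_of_le_of_ne hki (by
        rintro rfl
        rw [hfix] at hk
        exact lt_irrefl _ hk)
      exact h ⟨k, i, j, hik, hj, hgt, by rw [hfix]; exact hk⟩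
  · rintro ⟨h1, h2⟩
    have hle1 : i.val ≤ (π i).val := by
      have hsub : (Iio i).image π ⊆ Iio (π i) := by
        intro x hx
        simp only [Finset.mem_image, Finset.mem_Iio] at hx ⊢
        obtain ⟨j, hj, rfl⟩ := hx
        exact h1 j hj
      have := Finset.card_le_card hsub
      rwa [Finset.card_image_of_injective _ π.injective, Fin.card_Iio, Fin.card_Iio] at this
    have hle2 : (π i).val ≤ i.val := by
      have hsub : (Ioi i).image π ⊆ Ioi (π i) := by
        intro x hx
        simp only [Finset.mem_image, Finset.mem_Ioi] at hx ⊢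
        obtain ⟨j, hj, rfl⟩ := hx
        exact h2 j hj
      have := Finset.card_le_card hsub
      rw [Finset.card_image_of_injective _ π.injective, Fin.card_Ioi, Fin.card_Ioi] at this
      have h1 : i.val ≤ n - 1 := Nat.le_sub_one_of_lt i.isLt
      have h2 : (π i).val ≤ n - 1 := Nat.le_sub_one_of_lt (π i).isLt
      omega
    exact Fin.ext (le_antisymm hle2 hle1)
end

section
/- In a 321-avoiding permutation π of {1,...,n}, an index i ∈ {1,...,n−1} is a descent (π(i) > π(i+1)) if and only if i is an excedance (π(i) > i) and i+1 is not an excedance (π(i+1) ≤ i+1). -/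
open Finset

lemma perm_card_filter {n : ℕ} (π : Equiv.Perm (Fin n)) (m : ℕ) :
    (Finset.univ.filter fun k : Fin n => (π k : ℕ) < m).card =
    (Finset.univ.filter fun k : Fin n => (k : ℕ) < m).card := by
  have : (Finset.univ.filter fun k : Fin n => (π k : ℕ) < m) =
      (Finset.univ.filter fun k : Fin n => (k : ℕ) < m).image π.symm := by
    ext k
    simp only [Finset.mem_filter, Finset.mem_image, Finset.mem_univ, true_and]
    constructor
    · intro hk; exact ⟨π k, hk, π.symm_apply_apply k⟩
    · rintro ⟨v, hv, rfl⟩; simpa using hv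
  rw [this, Finset.card_image_of_injective _ π.symm.injective]

lemma perm_pigeon {n : ℕ} (π : Equiv.Perm (Fin n)) (m : ℕ)
    (a : Fin n) (ha : (a : ℕ) < m) (hπa : m ≤ (π a : ℕ)) :
    ∃ k : Fin n, m ≤ (k : ℕ) ∧ (π k : ℕ) < m := by
  by_contra hc
  push_neg at hc
  -- then {k | π k < m} ⊆ {k | k < m}, equal cards force equality
  have hsub : (Finset.univ.filter fun k : Fin n => (π k : ℕ) < m) ⊆
      (Finset.univ.filter fun k : Fin n => (k : ℕ) < m) := by
    intro k hk
    simp only [Finset.mem_filter, Finset.mem_univ, true_and] at hk ⊢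
    by_contra hk'
    push_neg at hk'
    exact absurd hk (not_lt.mpr (hc k hk'))
  have heq := Finset.eq_of_subset_of_card_le hsub (le_of_eq (perm_card_filter π m).symm)
  have : a ∈ (Finset.univ.filter fun k : Fin n => (π k : ℕ) < m) := by
    rw [heq]; simp [ha]
  simp only [Finset.mem_filter, Finset.mem_univ, true_and] at this
  omega

lemma perm_pigeon' {n : ℕ} (π : Equiv.Perm (Fin n)) (m : ℕ)
    (a : Fin n) (ha : m ≤ (a : ℕ)) (hπa : (π a : ℕ) < m) :
    ∃ k : Fin n, (k : ℕ) < m ∧ m ≤ (π k : ℕ) := by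
  obtain ⟨k, hk1, hk2⟩ := perm_pigeon π.symm m (π a) hπa (by simpa using ha)
  exact ⟨π.symm k, hk2, by simpa using hk1⟩

theorem descent_iff_excedance_nonexcedance {n : ℕ} (π : Equiv.Perm (Fin n))
    (h : Avoids321 π) (i j : Fin n) (hij : (j : ℕ) = (i : ℕ) + 1) :
    π j < π i ↔ (i < π i ∧ π j ≤ j) := by
  constructor
  · intro hd
    have hd' : (π j : ℕ) < (π i : ℕ) := hd
    have hji : π j ≤ j := by
      by_contra hjj
      push_neg at hjj
      have hjj' : (j : ℕ) < (π j : ℕ) := hjj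
      obtain ⟨k, hk1, hk2⟩ := perm_pigeon π ((j : ℕ) + 1) i (by omega) (by omega)
      exact h ⟨i, j, k, Fin.lt_def.mpr (by omega), Fin.lt_def.mpr (by omega),
        Fin.lt_def.mpr (by omega), hd⟩
    refine ⟨?_, hji⟩
    by_contra hii
    push_neg at hii
    have hii' : (π i : ℕ) ≤ (i : ℕ) := hii
    obtain ⟨k, hk1, hk2⟩ := perm_pigeon' π (i : ℕ) j (by omega) (by omega)
    have hki : (π k : ℕ) ≠ (π i : ℕ) := fun he => by
      have hke : k = i := π.injective (Fin.ext he)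
      have := congrArg Fin.val hke
      omega
    exact h ⟨k, i, j, Fin.lt_def.mpr (by omega), Fin.lt_def.mpr (by omega), hd,
      Fin.lt_def.mpr (by omega)⟩
  · rintro ⟨hi, hj⟩
    have h1 : (i : ℕ) < (π i : ℕ) := hi
    have h2 : (π j : ℕ) ≤ (j : ℕ) := hj
    have hne : (π j : ℕ) ≠ (π i : ℕ) := fun he => by
      have hje : j = i := π.injective (Fin.ext he)
      have := congrArg Fin.val hje
      omega
    exact Fin.lt_def.mpr (by omega)
end

section
/- For a permutation π of {1,...,n}, the descent-top subword π_d and the remaining-letter subword π_nd are both increasing if and only if π avoids 321 and the set of excedances of π equals the set of descents of π. -/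
open Finset

/-- i is a descent of π: there is a next position with a smaller value. -/
def IsDescent {n : ℕ} (π : Equiv.Perm (Fin n)) (i : Fin n) : Prop :=
  ∃ j : Fin n, (j : ℕ) = (i : ℕ) + 1 ∧ π j < π i

theorem descent_top_words_increasing_iff {n : ℕ} (π : Equiv.Perm (Fin n)) :
    ((∀ i j : Fin n, i < j → IsDescent π i → IsDescent π j → π i < π j) ∧
     (∀ i j : Fin n, i < j → ¬ IsDescent π i → ¬ IsDescent π j → π i < π j)) ↔
    (Avoids321 π ∧ ∀ i : Fin n, i < π i ↔ IsDescent π i) := by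
  constructor
  · rintro ⟨hd, hnd⟩
    have hinj := π.injective
    -- no two consecutive descents
    have L1 : ∀ i j : Fin n, (j : ℕ) = (i : ℕ) + 1 → IsDescent π i → ¬ IsDescent π j := by
      intro i j hj di dj
      have hij : i < j := by rw [Fin.lt_def]; omega
      have h1 := hd i j hij di dj
      obtain ⟨j', hj', hlt⟩ := di
      have hjj : j' = j := Fin.ext (by omega)
      subst hjj
      exact lt_asymm h1 hlt
    -- everything before a descent has smaller value
    have L2 : ∀ i j : Fin n, i < j → IsDescent π j → π i < π j := by
      intro i j hij dj
      by_cases di : IsDescent π i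
      · exact hd i j hij di dj
      · by_contra hc
        push_neg at hc
        obtain ⟨j', hj', hlt⟩ := id dj
        have ndj' := L1 j j' hj' dj
        have hij' : i < j' := by
          have h1 : (i : ℕ) < j := Fin.lt_def.mp hij
          rw [Fin.lt_def]; omega
        have h2 := hnd i j' hij' di ndj'
        exact absurd h2 (not_lt.mpr (hlt.le.trans hc))
    -- descents are excedances
    have E1 : ∀ i : Fin n, IsDescent π i → i < π i := by
      intro i di
      obtain ⟨j, hj, hlt⟩ := di
      have hmap : ∀ k : Fin n, k ≤ j → π k ≤ π i := by
        intro k hk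
        rcases lt_trichotomy k i with h | h | h
        · exact (L2 k i h ⟨j, hj, hlt⟩).le
        · exact le_of_eq (by rw [h])
        · have hkj : k = j := Fin.ext (by
            have h1 : (i : ℕ) < k := Fin.lt_def.mp h
            have h2 : (k : ℕ) ≤ j := Fin.le_def.mp hk
            omega)
          subst hkj; exact hlt.le
      have hsub : (Finset.Iic j).image π ⊆ Finset.Iic (π i) := by
        intro x hx
        simp only [Finset.mem_image, Finset.mem_Iic] at hx ⊢
        obtain ⟨k, hk, rfl⟩ := hx
        exact hmap k hk
      have hc := Finset.card_le_card hsub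
      rw [Finset.card_image_of_injective _ hinj, Fin.card_Iic, Fin.card_Iic] at hc
      rw [Fin.lt_def]; omega
    -- non-descents are non-excedances
    have E2 : ∀ i : Fin n, ¬ IsDescent π i → (π i : ℕ) ≤ i := by
      intro i di
      have hmap : ∀ k : Fin n, i ≤ k → π i ≤ π k := by
        intro k hk
        rcases eq_or_lt_of_le hk with h | h
        · exact le_of_eq (by rw [h])
        · by_cases dk : IsDescent π k
          · exact (L2 i k h dk).le
          · exact (hnd i k h di dk).le
      have hsub : (Finset.Ici i).image π ⊆ Finset.Ici (π i) := by
        intro x hx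
        simp only [Finset.mem_image, Finset.mem_Ici] at hx ⊢
        obtain ⟨k, hk, rfl⟩ := hx
        exact hmap k hk
      have hc := Finset.card_le_card hsub
      rw [Finset.card_image_of_injective _ hinj, Fin.card_Ici, Fin.card_Ici] at hc
      have h1 := i.isLt
      have h2 := (π i).isLt
      omega
    refine ⟨?_, fun i => ⟨?_, E1 i⟩⟩
    · rintro ⟨i, j, k, hij, hjk, h1, h2⟩
      have hik := hij.trans hjk
      have h3 := h1.trans h2
      by_cases da : IsDescent π i <;> by_cases db : IsDescent π j <;>
        by_cases dc : IsDescent π k <;>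
      first
        | exact lt_asymm h2 (hd i j hij da db)
        | exact lt_asymm h1 (hd j k hjk db dc)
        | exact lt_asymm h3 (hd i k hik da dc)
        | exact lt_asymm h2 (hnd i j hij da db)
        | exact lt_asymm h1 (hnd j k hjk db dc)
        | exact lt_asymm h3 (hnd i k hik da dc)
    · intro h
      by_contra dn
      have := E2 i dn
      have h1 := Fin.lt_def.mp h
      omega
  · rintro ⟨hav, hex⟩
    have hinj := π.injective
    constructor
    · intro i j hij di dj
      obtain ⟨j', hj', hlt⟩ := dj
      rcases lt_or_gt_of_ne (fun h => hij.ne (hinj h)) with h | h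
      · exact h
      · exact absurd ⟨i, j, j', hij, by rw [Fin.lt_def]; omega, hlt, h⟩ hav
    · intro i j hij di dj
      rcases lt_or_gt_of_ne (fun h => hij.ne (hinj h)) with h | h
      · exact h
      · exfalso
        have hi : (π i : ℕ) ≤ i := by
          by_contra hc
          exact di ((hex i).mp (by rw [Fin.lt_def]; omega))
        by_cases hall : ∀ k ∈ Finset.Iic i, π k ≤ π i
        · have hsub : (Finset.Iic i).image π ⊆ Finset.Iic (π i) := by
            intro x hx
            simp only [Finset.mem_image, Finset.mem_Iic] at hx ⊢
            obtain ⟨k, hk, rfl⟩ := hx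
            exact hall k (Finset.mem_Iic.mpr hk)
          have hc1 := Finset.card_le_card hsub
          rw [Finset.card_image_of_injective _ hinj, Fin.card_Iic, Fin.card_Iic] at hc1
          have heq : (Finset.Iic i).image π = Finset.Iic (π i) :=
            Finset.eq_of_subset_of_card_le hsub (by
              rw [Finset.card_image_of_injective _ hinj, Fin.card_Iic, Fin.card_Iic]
              omega)
          have hjm : π j ∈ Finset.Iic (π i) := Finset.mem_Iic.mpr h.le
          rw [← heq, Finset.mem_image] at hjm
          obtain ⟨k, hk, hkj⟩ := hjm
          have hkj' : k = j := hinj hkj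
          subst hkj'
          have := Finset.mem_Iic.mp hk
          exact absurd hij (not_lt.mpr this)
        · push_neg at hall
          obtain ⟨k, hk, hki⟩ := hall
          have hki' : k < i :=
            lt_of_le_of_ne (Finset.mem_Iic.mp hk) (fun h' => by subst h'; exact lt_irrefl _ hki)
          exact hav ⟨k, i, j, hki', hij, h, hki⟩
end

section
/- Two bi-increasing permutations of {1,...,n} with the same excedance set and the same set of excedance letters are equal. That is, a 321-avoiding permutation is uniquely determined by its set of excedances together with its set of excedance letters. -/
open Finset

lemma erase_image_of_injOn {α β : Type*} [DecidableEq α] [DecidableEq β]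
    (s : Finset α) (f : α → β) (hf : Set.InjOn f s) (m : α) (hm : m ∈ s) :
    (s.erase m).image f = (s.image f).erase (f m) := by
  ext b
  simp only [Finset.mem_image, Finset.mem_erase]
  constructor
  · rintro ⟨a, ⟨hane, has⟩, rfl⟩
    exact ⟨fun h => hane (hf has hm h), a, has, rfl⟩
  · rintro ⟨hb, a, has, rfl⟩
    exact ⟨a, ⟨fun h => hb (by rw [h]), has⟩, rfl⟩

lemma strictMonoOn_eq {n : ℕ} (s : Finset (Fin n)) (f g : Fin n → Fin n)
    (hf : StrictMonoOn f ↑s) (hg : StrictMonoOn g ↑s)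
    (him : s.image f = s.image g) : ∀ i ∈ s, f i = g i := by
  induction s using Finset.strongInduction with
  | _ s ih =>
    intro i hi
    have hne : s.Nonempty := ⟨i, hi⟩
    set m := s.min' hne with hmdef
    have hm : m ∈ s := s.min'_mem hne
    have key : ∀ (h : Fin n → Fin n), StrictMonoOn h ↑s →
        h m = (s.image h).min' (hne.image h) := by
      intro h hh
      refine le_antisymm (Finset.le_min' _ _ _ ?_) (Finset.min'_le _ _ (Finset.mem_image_of_mem _ hm))
      intro b hb
      obtain ⟨a, ha, rfl⟩ := Finset.mem_image.mp hb
      rcases eq_or_lt_of_le (s.min'_le a ha) with h1 | h1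
      · exact le_of_eq (congrArg h h1)
      · exact le_of_lt (hh hm ha h1)
    have hfg : f m = g m := by rw [key f hf, key g hg]; simp only [him]
    rcases eq_or_ne i m with rfl | hne'
    · exact hfg
    · have hi' : i ∈ s.erase m := Finset.mem_erase.mpr ⟨hne', hi⟩
      refine ih (s.erase m) (Finset.erase_ssubset hm) ?_ ?_ ?_ i hi'
      · exact hf.mono (by simp [Finset.coe_subset, Finset.erase_subset])
      · exact hg.mono (by simp [Finset.coe_subset, Finset.erase_subset])
      · rw [erase_image_of_injOn s f hf.injOn m hm,
            erase_image_of_injOn s g hg.injOn m hm, him, hfg]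

theorem biIncreasing_determined_by_excedances {n : ℕ} (π σ : Equiv.Perm (Fin n))
    (hπ : BiIncreasing π) (hσ : BiIncreasing σ)
    (hset : {i : Fin n | i < π i} = {i : Fin n | i < σ i})
    (hletters : π '' {i : Fin n | i < π i} = σ '' {i : Fin n | i < σ i}) :
    π = σ := by
  set E : Finset (Fin n) := Finset.univ.filter (fun i => i < π i) with hEdef
  set F : Finset (Fin n) := Finset.univ.filter (fun i => ¬ i < π i) with hFdef
  have hEc : (↑E : Set (Fin n)) = {i : Fin n | i < π i} := by ext x; simp [hEdef]
  have hFc : (↑F : Set (Fin n)) = {i : Fin n | i < π i}ᶜ := by ext x; simp [hFdef]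
  have hmemσ : ∀ i : Fin n, i ∈ E → i < σ i := by
    intro i hi
    have : i ∈ {i : Fin n | i < σ i} := hset ▸ (by simpa [hEdef] using hi)
    exact this
  have hmemσ' : ∀ i : Fin n, i ∈ F → σ i ≤ i := by
    intro i hi
    have hiπ : ¬ i < π i := by simpa [hFdef] using hi
    have : i ∉ {i : Fin n | i < σ i} := hset ▸ hiπ
    exact not_lt.mp this
  have hfE : StrictMonoOn (⇑π) ↑E := by
    intro i hi j hj hij
    exact hπ.1 i j hij (by simpa [hEdef] using hi) (by simpa [hEdef] using hj)
  have hgE : StrictMonoOn (⇑σ) ↑E := fun i hi j hj hij =>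
    hσ.1 i j hij (hmemσ i (by simpa using hi)) (hmemσ j (by simpa using hj))
  have hfF : StrictMonoOn (⇑π) ↑F := by
    intro i hi j hj hij
    exact hπ.2 i j hij (not_lt.mp (by simpa [hFdef] using hi))
      (not_lt.mp (by simpa [hFdef] using hj))
  have hgF : StrictMonoOn (⇑σ) ↑F := fun i hi j hj hij =>
    hσ.2 i j hij (hmemσ' i (by simpa using hi)) (hmemσ' j (by simpa using hj))
  have himE : E.image π = E.image σ := by
    apply Finset.coe_injective
    rw [Finset.coe_image, Finset.coe_image, hEc, hletters, hset]
  have himF : F.image π = F.image σ := by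
    apply Finset.coe_injective
    rw [Finset.coe_image, Finset.coe_image, hFc,
      Set.image_compl_eq π.bijective, hletters, hset,
      ← Set.image_compl_eq σ.bijective]
  ext i
  by_cases h : i < π i
  · have : (π : Fin n → Fin n) i = σ i :=
      strictMonoOn_eq E π σ hfE hgE himE i (by simp [hEdef, h])
    exact congrArg Fin.val this
  · have : (π : Fin n → Fin n) i = σ i :=
      strictMonoOn_eq F π σ hfF hgF himF i (by simp [hFdef, not_lt.mp h])
    exact congrArg Fin.val this
end

section
/- For every permutation π of {1,...,n}, dexc(π) ≤ n²/4. Moreover, for every integer k with 0 ≤ k ≤ n²/4 there exists a permutation π of {1,...,n} with dexc(π) = k. -/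
open Finset

/-!
If `π` has `e` excedances, their values `π i` are `e` distinct numbers below `n` and their
positions `i` are `e` distinct numbers, so `dexc π` is at most the sum of the `e` largest
elements of `[0, n)` minus the sum of the `e` smallest, which is `e (n - e) ≤ n² / 4`.

Conversely, in `Fin (m + 2)` the transposition `(0 k)` realises every `k ≤ m + 1`, and swapping
`0` with `m + 1` around a permutation of the `m` middle points adds `m + 1` to its `dexc`;
induction on `n` then reaches every `k ≤ n² / 4`.
-/

theorem dexc_eq_sum {n : ℕ} (π : Equiv.Perm (Fin n)) :
    dexc π = ∑ i, ((π i : ℕ) - i) :=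
  sum_filter_of_ne fun i _ h => Fin.lt_def.2 (by omega)

theorem dexc_one {n : ℕ} : dexc (1 : Equiv.Perm (Fin n)) = 0 := by
  simp [dexc_eq_sum]

theorem exc_le {n : ℕ} (π : Equiv.Perm (Fin n)) : exc π ≤ n :=
  (card_filter_le _ _).trans_eq (card_fin n)

section SumBounds

variable {n : ℕ} (s : Finset (Fin n))

theorem sum_range_le_sum_val : ∑ j ∈ range #s, (j : ℤ) ≤ ∑ i ∈ s, (i : ℤ) := by
  simpa using sum_range_le_sum (s := s.map (Fin.valEmbedding.trans Nat.castEmbedding)) (c := 0)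
    (by simp)

theorem sum_val_le_sum_range : ∑ i ∈ s, (i : ℤ) ≤ ∑ j ∈ range #s, ((n : ℤ) - 1 - j) := by
  simpa using sum_le_sum_range (s := s.map (Fin.valEmbedding.trans Nat.castEmbedding))
    (c := n - 1) (by simp)

end SumBounds

theorem sum_range_sub_sum_range (n e : ℕ) :
    ∑ j ∈ range e, ((n : ℤ) - 1 - j) - ∑ j ∈ range e, (j : ℤ) = e * (n - e) := by
  induction e with
  | zero => simp
  | succ e ih => rw [sum_range_succ, sum_range_succ]; push_cast; linarith

theorem dexc_le_exc_mul {n : ℕ} (π : Equiv.Perm (Fin n)) :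
    dexc π ≤ exc π * (n - exc π) := by
  set E := univ.filter (fun i => i < π i)
  have hexc : exc π = #E := rfl
  have hdexc : (dexc π : ℤ) = ∑ i ∈ E.map π.toEmbedding, (i : ℤ) - ∑ i ∈ E, (i : ℤ) := by
    rw [dexc, sum_map, ← sum_sub_distrib, Nat.cast_sum]
    refine sum_congr rfl fun i hi => ?_
    simp [Nat.cast_sub (mem_filter.1 hi).2.le]
  zify [exc_le π]
  calc (dexc π : ℤ)
      ≤ ∑ j ∈ range #E, ((n : ℤ) - 1 - j) - ∑ j ∈ range #E, (j : ℤ) := by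
        have hupper := sum_val_le_sum_range (E.map π.toEmbedding)
        rw [card_map] at hupper
        linarith [sum_range_le_sum_val E]
    _ = exc π * (n - exc π) := by rw [hexc, sum_range_sub_sum_range]

theorem four_mul_mul_sub_le {e n : ℕ} (h : e ≤ n) : 4 * (e * (n - e)) ≤ n ^ 2 := by
  obtain ⟨r, rfl⟩ := Nat.exists_eq_add_of_le h
  rw [Nat.add_sub_cancel_left]
  nlinarith [sq_nonneg ((e : ℤ) - r)]

theorem four_mul_dexc_le {n : ℕ} (π : Equiv.Perm (Fin n)) : 4 * dexc π ≤ n ^ 2 :=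
  (Nat.mul_le_mul_left 4 (dexc_le_exc_mul π)).trans (four_mul_mul_sub_le (exc_le π))

theorem dexc_swap {n : ℕ} {a b : Fin n} (h : a ≤ b) : dexc (Equiv.swap a b) = b - a := by
  rw [dexc_eq_sum, sum_eq_single a]
  · simp
  · intro j _ hja
    rcases eq_or_ne j b with rfl | hjb
    · simp [Nat.sub_eq_zero_of_le (Fin.le_def.1 h)]
    · simp [Equiv.swap_apply_of_ne_of_ne hja hjb]
  · simp

def outerSwapFun {m : ℕ} (σ : Fin m → Fin m) : Fin (m + 2) → Fin (m + 2) :=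
  Fin.cases (Fin.last _) (Fin.lastCases 0 fun i => (σ i).castSucc.succ)

@[simp]
theorem outerSwapFun_zero {m : ℕ} (σ : Fin m → Fin m) : outerSwapFun σ 0 = Fin.last _ := rfl

@[simp]
theorem outerSwapFun_last {m : ℕ} (σ : Fin m → Fin m) : outerSwapFun σ (Fin.last _) = 0 := by
  rw [← Fin.succ_last, outerSwapFun, Fin.cases_succ, Fin.lastCases_last]

@[simp]
theorem outerSwapFun_castSucc_succ {m : ℕ} (σ : Fin m → Fin m) (i : Fin m) :
    outerSwapFun σ i.castSucc.succ = (σ i).castSucc.succ := by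
  simp [outerSwapFun]

theorem outerSwapFun_leftInverse {m : ℕ} {σ τ : Fin m → Fin m} (h : Function.LeftInverse τ σ) :
    Function.LeftInverse (outerSwapFun τ) (outerSwapFun σ) := by
  intro j
  induction j using Fin.cases with
  | zero => simp
  | succ j =>
    induction j using Fin.lastCases with
    | last => rw [Fin.succ_last]; simp
    | cast i => simp [h i]

def outerSwap {m : ℕ} (σ : Equiv.Perm (Fin m)) : Equiv.Perm (Fin (m + 2)) where
  toFun := outerSwapFun σ
  invFun := outerSwapFun σ.symm
  left_inv := outerSwapFun_leftInverse σ.left_inv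
  right_inv := outerSwapFun_leftInverse σ.right_inv

theorem dexc_outerSwap {m : ℕ} (σ : Equiv.Perm (Fin m)) :
    dexc (outerSwap σ) = m + 1 + dexc σ := by
  rw [dexc_eq_sum, dexc_eq_sum, Fin.sum_univ_succ, Fin.sum_univ_castSucc]
  simp [outerSwap, Fin.succ_last]

theorem exists_dexc_eq (n k : ℕ) (hk : 4 * k ≤ n ^ 2) : ∃ π : Equiv.Perm (Fin n), dexc π = k := by
  induction n using Nat.twoStepInduction generalizing k with
  | zero => exact ⟨1, by rw [dexc_one]; omega⟩
  | one => exact ⟨1, by rw [dexc_one]; omega⟩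
  | more m ih _ =>
    by_cases hkm : k ≤ m + 1
    · exact ⟨Equiv.swap 0 ⟨k, by omega⟩, by simp [dexc_swap]⟩
    · obtain ⟨σ, hσ⟩ := ih (k - (m + 1)) (by rw [add_sq] at hk; omega)
      exact ⟨outerSwap σ, by rw [dexc_outerSwap, hσ]; omega⟩

theorem dexc_le_and_surjective (n : ℕ) :
    (∀ π : Equiv.Perm (Fin n), 4 * dexc π ≤ n ^ 2) ∧
    (∀ k : ℕ, 4 * k ≤ n ^ 2 → ∃ π : Equiv.Perm (Fin n), dexc π = k) :=
  ⟨four_mul_dexc_le, exists_dexc_eq n⟩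
end

section
/- The statistics dexc and ddes are equidistributed over the symmetric group S_n: for every n and k, the number of permutations π of {1,...,n} with dexc(π) = k equals the number with ddes(π) = k. Moreover the pairs (exc, dexc) and (des, ddes) are equidistributed over S_n. -/
open Finset

/-- The number of descents of π. -/
def des {n : ℕ} (π : Equiv.Perm (Fin n)) : ℕ :=
  (univ.filter (fun p : Fin n × Fin n => (p.2 : ℕ) = (p.1 : ℕ) + 1 ∧ π p.2 < π p.1)).card

/-- The descent difference of π. -/
def ddes {n : ℕ} (π : Equiv.Perm (Fin n)) : ℕ :=
  ∑ p ∈ univ.filter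
      (fun p : Fin n × Fin n => (p.2 : ℕ) = (p.1 : ℕ) + 1 ∧ π p.2 < π p.1),
    ((π p.1 : ℕ) - (π p.2 : ℕ))

/-!
Encode a permutation `π` of `Fin n` by the multiset of its excedance pairs `(π i, i)` with
`i < π i`, and alternatively by the multiset of its descent pairs `(π i, π (i + 1))` with
`π (i + 1) < π i`: `exc`, `dexc` and `des`, `ddes` are the size and the sum of differences of
these multisets. We show that the two multisets are equidistributed over `Perm (Fin n)`.

Every permutation of `Fin (n + 1)` arises in exactly one way from a permutation `σ` of `Fin n`
by inserting the new maximum `n`, either into the cycles of `σ` (`π i = n`, `π n = σ i`) or into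
the one-line word of `σ`. In both cases the pair multisets of the `n + 1` children depend only on
the pair multiset `Q` of `σ`: they are `Q` itself (`n` becomes a fixed point, resp. the last
letter), and for every `v < n` the multiset `Q` with its pair of second entry `v`, if any,
replaced by `(n, v)`. Induction on `n` finishes the proof.
-/

open Equiv

def excPairs {m : ℕ} (w : Fin m → ℕ) : Multiset (ℕ × ℕ) :=
  (univ.filter fun i : Fin m => (i : ℕ) < w i).val.map fun i => (w i, (i : ℕ))

lemma exc_eq_card_excPairs {n : ℕ} (π : Perm (Fin n)) :
    exc π = Multiset.card (excPairs (Fin.val ∘ π)) := by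
  simp [exc, excPairs, Finset.card_def]

lemma dexc_eq_sum_excPairs {n : ℕ} (π : Perm (Fin n)) :
    dexc π = ((excPairs (Fin.val ∘ π)).map fun q => q.1 - q.2).sum := by
  simp [dexc, excPairs, Finset.sum_eq_multiset_sum]

lemma excPairs_init {m : ℕ} (w : Fin (m + 1) → ℕ) (h : w (Fin.last m) ≤ m) :
    excPairs w = excPairs (Fin.init w) := by
  rw [excPairs, Fin.univ_castSuccEmb, Finset.filter_cons_of_neg (hp := by simpa using h),
    Finset.filter_map, Finset.map_val, Multiset.map_map]
  rfl

lemma excPairs_update {m : ℕ} (w : Fin m → ℕ) (k : Fin m) {x : ℕ} (hk : (k : ℕ) < x) :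
    excPairs (Function.update w k x) = (x, (k : ℕ)) ::ₘ (excPairs w).filter (·.2 ≠ k) := by
  have hs : univ.filter (fun i : Fin m => (i : ℕ) < Function.update w k x i)
      = cons k (univ.filter fun i : Fin m => (i : ℕ) < w i ∧ i ≠ k) (by simp) := by
    ext i
    by_cases hi : i = k <;> simp [hi, hk]
  rw [excPairs, hs, Finset.cons_val, Multiset.map_cons, Function.update_self, excPairs,
    Multiset.filter_map, ← Finset.filter_val, Finset.filter_filter]
  congr 1
  refine Multiset.map_congr ?_ fun i hi => ?_
  · congr 2; ext i; simp [Fin.val_eq_val]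
  · simp only [Finset.mem_val, Finset.mem_filter, Function.comp_apply, ne_eq,
      Fin.val_eq_val] at hi
    rw [Function.update_of_ne hi.2.2]

def descentPairs : List ℕ → Multiset (ℕ × ℕ)
  | a :: b :: l => (if b < a then {(a, b)} else 0) + descentPairs (b :: l)
  | _ => 0

lemma descentPairs_cons_cons (a b : ℕ) (l : List ℕ) :
    descentPairs (a :: b :: l) = (if b < a then {(a, b)} else 0) + descentPairs (b :: l) :=
  rfl

lemma snd_mem_of_mem_descentPairs {a : ℕ} {l : List ℕ} {q : ℕ × ℕ}
    (hq : q ∈ descentPairs (a :: l)) : q.2 ∈ l := by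
  induction l generalizing a with
  | nil => simp [descentPairs] at hq
  | cons b l ih =>
    rw [descentPairs, Multiset.mem_add] at hq
    rcases hq with hq | hq
    · split_ifs at hq <;> simp_all
    · exact List.mem_cons_of_mem b (ih hq)

lemma descentPairs_append_singleton {l : List ℕ} {x : ℕ} (hx : ∀ a ∈ l, a < x) :
    descentPairs (l ++ [x]) = descentPairs l := by
  match l, hx with
  | [], _ => rfl
  | [a], hx => simp [descentPairs, (hx a (by simp)).not_gt]
  | a :: b :: l, hx =>
    simp only [List.cons_append, descentPairs]
    rw [← List.cons_append, descentPairs_append_singleton fun c hc => hx c (by simp_all)]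

lemma descentPairs_insertIdx {l : List ℕ} (hl : l.Nodup) {x : ℕ} (hx : ∀ a ∈ l, a < x)
    {j : ℕ} (hj : j < l.length) :
    descentPairs (l.insertIdx j x) = (x, l[j]) ::ₘ (descentPairs l).filter (·.2 ≠ l[j]) := by
  induction l generalizing j with
  | nil => simp at hj
  | cons a t ih =>
    obtain ⟨ha, ht⟩ := List.nodup_cons.mp hl
    have hxt : ∀ c ∈ t, c < x := fun c hc => hx c (List.mem_cons_of_mem a hc)
    match j, t, ih with
    | 0, t, _ =>
      have hfix : (descentPairs (a :: t)).filter (·.2 ≠ a) = descentPairs (a :: t) :=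
        Multiset.filter_eq_self.mpr fun q hq h => ha (h ▸ snd_mem_of_mem_descentPairs hq)
      rw [List.insertIdx_zero, List.getElem_cons_zero, hfix, descentPairs,
        if_pos (hx a (by simp)), Multiset.singleton_add]
    | 1, b :: t, ih =>
      have hxa : ¬ x < a := (hx a (by simp)).not_gt
      have := ih ht hxt (j := 0) (by simp)
      rw [List.insertIdx_succ_cons, List.insertIdx_zero] at *
      have hdrop :
          (if b < a then {(a, b)} else 0 : Multiset (ℕ × ℕ)).filter (·.2 ≠ b) = 0 := by
        split_ifs <;> simp
      rw [descentPairs, if_neg hxa, zero_add, this]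
      simp only [List.getElem_cons_succ, List.getElem_cons_zero]
      rw [descentPairs_cons_cons a, Multiset.filter_add, hdrop, zero_add]
    | j + 2, b :: t, ih =>
      have hjt : j < t.length := by simp at hj; omega
      have hbj : b ≠ t[j] := fun h => (List.nodup_cons.mp ht).1 (h ▸ List.getElem_mem _)
      have hkeep : (if b < a then {(a, b)} else 0 : Multiset (ℕ × ℕ)).filter (·.2 ≠ t[j])
          = if b < a then {(a, b)} else 0 := by
        split_ifs <;> simp [hbj]
      have := ih ht hxt (j := j + 1) (by simpa using hj)
      rw [List.insertIdx_succ_cons, List.insertIdx_succ_cons] at *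
      rw [descentPairs, this]
      simp only [List.getElem_cons_succ]
      rw [descentPairs_cons_cons a, Multiset.filter_add, hkeep, Multiset.add_cons]

lemma sum_sum_ite_eq_descentPairs_ofFn {m : ℕ} (w : Fin m → ℕ) :
    (∑ a : Fin m, ∑ b : Fin m, if (b : ℕ) = a + 1 ∧ w b < w a then {(w a, w b)} else 0)
      = descentPairs (List.ofFn w) := by
  induction m with
  | zero => rfl
  | succ m ih =>
    have := ih (fun i => w i.succ)
    cases m with
    | zero => simp [descentPairs]
    | succ m =>
      have hd : descentPairs (w 0 :: List.ofFn fun i => w i.succ)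
          = (if w 1 < w 0 then {(w 0, w 1)} else 0)
            + descentPairs (List.ofFn fun i => w i.succ) := by
        rw [List.ofFn_succ (f := fun i => w i.succ)]
        rfl
      rw [List.ofFn_succ, hd, ← this]
      simp [Fin.sum_univ_succ]

lemma des_eq_card_descentPairs {n : ℕ} (π : Perm (Fin n)) :
    des π = Multiset.card (descentPairs (List.ofFn (Fin.val ∘ π))) := by
  rw [← sum_sum_ite_eq_descentPairs_ofFn, ← Multiset.cardHom_apply, map_sum]
  rw [des, Finset.card_filter, Fintype.sum_prod_type]
  simp [apply_ite]

lemma ddes_eq_sum_descentPairs {n : ℕ} (π : Perm (Fin n)) :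
    ddes π = ((descentPairs (List.ofFn (Fin.val ∘ π))).map fun q => q.1 - q.2).sum := by
  rw [← sum_sum_ite_eq_descentPairs_ofFn, ← Multiset.coe_mapAddMonoidHom, map_sum,
    ← Multiset.coe_sumAddMonoidHom, map_sum]
  simp [ddes, Finset.sum_filter, Fintype.sum_prod_type, apply_ite]

/-- Position `k` is sent to the new maximum `n` if `e k = none` and to `σ m` if `e k = some m`. -/
def insertMax {n : ℕ} (e : Fin (n + 1) ≃ Option (Fin n)) (σ : Perm (Fin n)) :
    Perm (Fin (n + 1)) :=
  e.trans ((optionCongr σ).trans finSuccEquivLast.symm)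

section insertMax

variable {n : ℕ} {e : Fin (n + 1) ≃ Option (Fin n)} {σ : Perm (Fin n)} {k : Fin (n + 1)}

lemma insertMax_apply_of_eq_none (h : e k = none) : insertMax e σ k = Fin.last n := by
  simp [insertMax, h]

lemma insertMax_apply_of_eq_some {m : Fin n} (h : e k = some m) :
    insertMax e σ k = (σ m).castSucc := by
  simp [insertMax, h, finSuccEquivLast_symm_some]

end insertMax

lemma insertMax_injective {n : ℕ} (e : Fin (n + 1) → Fin (n + 1) ≃ Option (Fin n))
    (he : ∀ j, e j j = none) :
    Function.Injective fun x : Perm (Fin n) × Fin (n + 1) => insertMax (e x.2) x.1 := by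
  rintro ⟨σ, i⟩ ⟨τ, j⟩ h
  dsimp only at h
  obtain rfl : i = j := (insertMax (e j) τ).injective <|
    (h ▸ insertMax_apply_of_eq_none (he i)).trans (insertMax_apply_of_eq_none (he j)).symm
  suffices optionCongr σ = optionCongr τ by rw [optionCongr_injective this]
  ext o : 1
  simpa [insertMax] using congr($h ((e i).symm o))

lemma map_univ_perm_eq_bind_insertMax {α : Type*} {n : ℕ}
    (e : Fin (n + 1) → Fin (n + 1) ≃ Option (Fin n)) (he : ∀ j, e j j = none)
    (f : Perm (Fin (n + 1)) → α) :
    (univ : Finset (Perm (Fin (n + 1)))).val.map f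
      = (univ : Finset (Perm (Fin n))).val.bind fun σ =>
          (univ : Finset (Fin (n + 1))).val.map fun j => f (insertMax (e j) σ) := by
  have hcard : Fintype.card (Perm (Fin n) × Fin (n + 1)) = Fintype.card (Perm (Fin (n + 1))) := by
    simp [Fintype.card_perm, Nat.factorial_succ, mul_comm]
  let E := Equiv.ofBijective _
    ((Fintype.bijective_iff_injective_and_card _).2 ⟨insertMax_injective e he, hcard⟩)
  rw [← Multiset.map_univ_val_equiv E, Multiset.map_map, ← Finset.univ_product_univ,
    Finset.product_val]
  exact (Multiset.map_bind _ _ _).trans (by simp only [Multiset.map_map]; rfl)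

/-- The pair multisets of the children of a permutation of `Fin n` with pair multiset `Q`. -/
def childPairs (n : ℕ) (Q : Multiset (ℕ × ℕ)) : Multiset (Multiset (ℕ × ℕ)) :=
  Q ::ₘ (univ : Finset (Fin n)).val.map fun v : Fin n =>
    (n, (v : ℕ)) ::ₘ Q.filter (·.2 ≠ v)

lemma univ_val_map_fin_succ {α : Type*} {n : ℕ} (f : Fin (n + 1) → α) :
    (univ : Finset (Fin (n + 1))).val.map f
      = f (Fin.last n) ::ₘ univ.val.map (f ∘ Fin.castSucc) := by
  rw [Fin.univ_castSuccEmb]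
  simp [Function.comp_def]

lemma map_excPairs_insertMax_swap {n : ℕ} (σ : Perm (Fin n)) :
    (univ : Finset (Fin (n + 1))).val.map (fun i =>
        excPairs (Fin.val ∘ insertMax ((swap i (Fin.last n)).trans finSuccEquivLast) σ))
      = childPairs n (excPairs (Fin.val ∘ σ)) := by
  rw [univ_val_map_fin_succ, childPairs]
  congr 1
  · rw [excPairs_init _ (by simp [insertMax_apply_of_eq_none])]
    congr 1
    funext m
    simp [Fin.init, insertMax_apply_of_eq_some]
  · refine Multiset.map_congr rfl fun k _ => ?_
    rw [Function.comp_apply, excPairs_init _ (by simp [insertMax_apply_of_eq_some]),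
      ← excPairs_update _ _ k.isLt]
    congr 1
    funext m
    by_cases hm : m = k
    · subst hm; simp [Fin.init, insertMax_apply_of_eq_none]
    · simp [Fin.init, insertMax_apply_of_eq_some, hm, swap_apply_of_ne_of_ne]

lemma List.ofFn_insertNth {α : Type*} {n : ℕ} (j : Fin (n + 1)) (x : α) (w : Fin n → α) :
    List.ofFn (Fin.insertNth j x w) = (List.ofFn w).insertIdx j x := by
  induction n with
  | zero =>
    obtain rfl := Fin.fin_one_eq_zero j
    simp [Fin.insertNth_zero']
  | succ n ih =>
    cases j using Fin.cases with
    | zero => simp [Fin.insertNth_zero', List.insertIdx_zero]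
    | succ j =>
      rw [← Fin.cons_self_tail w, Fin.insertNth_succ_cons, List.ofFn_cons, List.ofFn_cons, ih]
      rfl

lemma val_comp_insertMax_finSuccEquiv' {n : ℕ} (σ : Perm (Fin n)) (j : Fin (n + 1)) :
    Fin.val ∘ insertMax (finSuccEquiv' j) σ = Fin.insertNth j n (Fin.val ∘ σ) := by
  funext k
  rcases Fin.eq_self_or_eq_succAbove j k with rfl | ⟨m, rfl⟩
  · simp [insertMax_apply_of_eq_none]
  · simp [insertMax_apply_of_eq_some]

lemma map_descentPairs_insertMax_finSuccEquiv' {n : ℕ} (σ : Perm (Fin n)) :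
    (univ : Finset (Fin (n + 1))).val.map (fun j =>
        descentPairs (List.ofFn (Fin.val ∘ insertMax (finSuccEquiv' j) σ)))
      = childPairs n (descentPairs (List.ofFn (Fin.val ∘ σ))) := by
  have hlt : ∀ a ∈ List.ofFn (Fin.val ∘ σ), a < n := by simp
  have hnd : (List.ofFn (Fin.val ∘ σ)).Nodup :=
    List.nodup_ofFn.mpr (Fin.val_injective.comp σ.injective)
  simp_rw [val_comp_insertMax_finSuccEquiv', List.ofFn_insertNth]
  rw [univ_val_map_fin_succ, childPairs]
  congr 1
  · have happend := List.insertIdx_length_self (l := List.ofFn (Fin.val ∘ σ)) (x := n)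
    rw [List.length_ofFn] at happend
    rw [Fin.val_last, happend, descentPairs_append_singleton hlt]
  · conv_rhs => rw [← Multiset.map_univ_val_equiv σ, Multiset.map_map]
    refine Multiset.map_congr rfl fun k _ => ?_
    rw [Function.comp_apply, Fin.val_castSucc, descentPairs_insertIdx hnd hlt (by simp)]
    simp

lemma map_excPairs_eq_map_descentPairs (n : ℕ) :
    (univ : Finset (Perm (Fin n))).val.map (fun π : Perm (Fin n) => excPairs (Fin.val ∘ π))
      = univ.val.map fun π : Perm (Fin n) => descentPairs (List.ofFn (Fin.val ∘ π)) := by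
  induction n with
  | zero => simp [excPairs, descentPairs]
  | succ n ih =>
    have hswap : ∀ i : Fin (n + 1), (swap i (Fin.last n)).trans finSuccEquivLast i = none := by
      simp
    rw [map_univ_perm_eq_bind_insertMax _ hswap, map_univ_perm_eq_bind_insertMax _ finSuccEquiv'_at]
    simp only [map_excPairs_insertMax_swap, map_descentPairs_insertMax_finSuccEquiv']
    rw [← Multiset.bind_map _ (childPairs n) fun π : Perm (Fin n) => excPairs (Fin.val ∘ π),
      ih, Multiset.bind_map]

lemma card_filter_excPairs_eq_card_filter_descentPairs (n : ℕ)
    (p : Multiset (ℕ × ℕ) → Prop) [DecidablePred p] :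
    #(univ.filter fun π : Perm (Fin n) => p (excPairs (Fin.val ∘ π)))
      = #(univ.filter fun π : Perm (Fin n) => p (descentPairs (List.ofFn (Fin.val ∘ π)))) := by
  simpa [Finset.card_def, Multiset.filter_map] using
    congr(Multiset.card (Multiset.filter p $(map_excPairs_eq_map_descentPairs n)))

open scoped Classical in
theorem dexc_ddes_equidistributed (n k e : ℕ) :
    (univ.filter (fun π : Equiv.Perm (Fin n) => dexc π = k)).card =
      (univ.filter (fun π : Equiv.Perm (Fin n) => ddes π = k)).card ∧
    (univ.filter (fun π : Equiv.Perm (Fin n) => exc π = e ∧ dexc π = k)).card =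
      (univ.filter (fun π : Equiv.Perm (Fin n) => des π = e ∧ ddes π = k)).card := by
  simp only [exc_eq_card_excPairs, dexc_eq_sum_excPairs, des_eq_card_descentPairs,
    ddes_eq_sum_descentPairs]
  exact ⟨card_filter_excPairs_eq_card_filter_descentPairs n fun Q => (Q.map _).sum = k,
    card_filter_excPairs_eq_card_filter_descentPairs n fun Q =>
      Multiset.card Q = e ∧ (Q.map _).sum = k⟩
end

section
/- For any permutation π of {1,...,n} and any non-excedance k of π, the number of non-excedances j with π(j) ≤ k < j equals the number of excedances i with i < k < π(i). -/
open Finset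

theorem nonexcedance_count_eq {n : ℕ} (π : Equiv.Perm (Fin n)) (k : Fin n)
    (hk : π k ≤ k) :
    (univ.filter (fun j : Fin n => π j ≤ j ∧ π j ≤ k ∧ k < j)).card =
      (univ.filter (fun i : Fin n => i < π i ∧ i < k ∧ k < π i)).card := by
  have h1 : (univ.filter (fun j : Fin n => π j ≤ j ∧ π j ≤ k ∧ k < j)) =
      (univ.filter (fun j : Fin n => π j ≤ k ∧ k < j)) := by
    ext j; simp only [mem_filter, mem_univ, true_and]
    constructor
    · rintro ⟨_, h2, h3⟩; exact ⟨h2, h3⟩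
    · rintro ⟨h2, h3⟩; exact ⟨le_of_lt (lt_of_le_of_lt h2 h3), h2, h3⟩
  have h2 : (univ.filter (fun i : Fin n => i < π i ∧ i < k ∧ k < π i)) =
      (univ.filter (fun i : Fin n => i ≤ k ∧ k < π i)) := by
    ext i; simp only [mem_filter, mem_univ, true_and]
    constructor
    · rintro ⟨_, h3, h4⟩; exact ⟨le_of_lt h3, h4⟩
    · rintro ⟨h3, h4⟩
      have hik : i ≠ k := by rintro rfl; exact absurd h4 (not_lt.2 hk)
      have hlt : i < k := lt_of_le_of_ne h3 hik
      exact ⟨lt_trans hlt h4, hlt, h4⟩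
  rw [h1, h2]
  -- key: #{i : k < π i} = #{j : k < j}
  have hbij : (univ.filter (fun i : Fin n => k < π i)).card =
      (univ.filter (fun j : Fin n => k < j)).card := by
    apply Finset.card_bij (fun i _ => π i)
    · intro i hi; simp only [mem_filter, mem_univ, true_and] at hi ⊢; exact hi
    · intro a _ b _ h; exact π.injective h
    · intro b hb
      refine ⟨π⁻¹ b, ?_, by simp⟩
      simp only [mem_filter, mem_univ, true_and] at hb ⊢
      simpa using hb
  have split1 : ((univ.filter (fun j : Fin n => k < j)).filter (fun j => π j ≤ k)).card +
      ((univ.filter (fun j : Fin n => k < j)).filter (fun j => ¬ π j ≤ k)).card =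
      (univ.filter (fun j : Fin n => k < j)).card :=
    Finset.card_filter_add_card_filter_not _
  have split2 : ((univ.filter (fun i : Fin n => k < π i)).filter (fun i => i ≤ k)).card +
      ((univ.filter (fun i : Fin n => k < π i)).filter (fun i => ¬ i ≤ k)).card =
      (univ.filter (fun i : Fin n => k < π i)).card :=
    Finset.card_filter_add_card_filter_not _
  have e1 : ((univ.filter (fun j : Fin n => k < j)).filter (fun j => π j ≤ k)) =
      (univ.filter (fun j : Fin n => π j ≤ k ∧ k < j)) := by
    ext j; simp [and_comm]
  have e2 : ((univ.filter (fun i : Fin n => k < π i)).filter (fun i => i ≤ k)) =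
      (univ.filter (fun i : Fin n => i ≤ k ∧ k < π i)) := by
    ext i; simp [and_comm]
  have e3 : ((univ.filter (fun j : Fin n => k < j)).filter (fun j => ¬ π j ≤ k)) =
      ((univ.filter (fun i : Fin n => k < π i)).filter (fun i => ¬ i ≤ k)) := by
    ext j; simp only [mem_filter, mem_univ, true_and, not_le]
    tauto
  rw [e1] at split1
  rw [e2] at split2
  rw [e3] at split1
  omega
end
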